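/- Lower bound for explaining Lipschitz functions via the pigeonhole principle: if g : [0,1]^d → ℝ takes at most N distinct values, then some level set of g restricted to [0,1]^d has Lebesgue measure at least 1/N; consequently, for the L-Lipschitz function f constructed to vary by L·D along a segment of length D inside that level set (where D is a lower bound on the diameter of any set of measure 1/N), sup_x |f(x) − g(x)| ≥ L·D/2. -/

import Mathlib

open MeasureTheory

open scoped ENNReal

/- The first claim is the pigeonhole principle for measures: the level sets of `g` on `S` cover `S`,
and there are at most `N` of them. The second claim is the triangle inequality: since `g a = g b`,
the errors at `a` and `b` differ by `f a - f b = L * D`, so one of them is at least half of that. -/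

theorem exists_measure_div_le_measure_inter_preimage {α β : Type*} [MeasurableSpace α]
    (μ : Measure α) {s : Set α} (hs : s.Nonempty) {g : α → β} (hfin : (g '' s).Finite)
    {N : ℕ} (hN : N ≠ 0) (hcard : (g '' s).ncard ≤ N) :
    ∃ y ∈ g '' s, μ s / N ≤ μ (s ∩ g ⁻¹' {y}) := by
  have hcover : μ s ≤ ∑ y ∈ hfin.toFinset, μ (s ∩ g ⁻¹' {y}) :=
    calc μ s ≤ μ (⋃ y ∈ hfin.toFinset, s ∩ g ⁻¹' {y}) :=
          measure_mono fun x hx => by simpa using ⟨hx, x, hx, rfl⟩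
      _ ≤ _ := measure_biUnion_finset_le _ _
  have hconst : ∑ _y ∈ hfin.toFinset, μ s / N ≤ μ s := by
    rw [Finset.sum_const, nsmul_eq_mul, ← Set.ncard_eq_toFinset_card _ hfin]
    calc _ ≤ (N : ℝ≥0∞) * (μ s / N) := by gcongr
      _ = μ s := ENNReal.mul_div_cancel (by simpa) (by simp)
  simpa using ENNReal.exists_le_of_sum_le (hfin.toFinset_nonempty.2 (hs.image g))
    (hconst.trans hcover)

theorem half_sub_le_abs_sub_or_half_sub_le_abs_sub (u v c : ℝ) :
    (u - v) / 2 ≤ |u - c| ∨ (u - v) / 2 ≤ |v - c| := by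
  by_contra! h
  have := abs_sub_abs_le_abs_sub (u - c) (v - c)
  linarith [le_abs_self (u - c), neg_abs_le (v - c)]

theorem pigeonhole_lipschitz_lower_bound_general (d N : ℕ) (hN : 0 < N)
    (g : EuclideanSpace ℝ (Fin d) → ℝ)
    (S : Set (EuclideanSpace ℝ (Fin d)))
    (hS : volume S = 1)
    (hfin : (g '' S).Finite) (hcard : (g '' S).ncard ≤ N)
    (L D : ℝ) :
    (∃ y : ℝ, (1 : ENNReal) / N ≤ volume {x | x ∈ S ∧ g x = y}) ∧
    (∀ (f : EuclideanSpace ℝ (Fin d) → ℝ) (a b : EuclideanSpace ℝ (Fin d)),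
      a ∈ S → b ∈ S → g a = g b → f a - f b = L * D →
      ∃ x ∈ S, L * D / 2 ≤ |f x - g x|) := by
  refine ⟨?_, fun f a b ha hb hgab hfab => ?_⟩
  · have hSne : S.Nonempty := nonempty_of_measure_ne_zero (μ := volume) (by simp [hS])
    obtain ⟨y, -, hy⟩ :=
      exists_measure_div_le_measure_inter_preimage volume hSne hfin hN.ne' hcard
    exact ⟨y, hS ▸ hy⟩
  · rcases half_sub_le_abs_sub_or_half_sub_le_abs_sub (f a) (f b) (g a) with h | h
    · exact ⟨a, ha, hfab ▸ h⟩
    · exact ⟨b, hb, hfab ▸ hgab ▸ h⟩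

/-- pigeonhole lower bound for explaining Lipschitz functions.
If `g` takes at most `N` distinct values on the unit cube `S`, then some level set of
`g` in `S` has Lebesgue measure at least `1/N`; and for any `f` varying by `L·D`
between two points of a common level set of `g`, the worst-case error is at least
`L·D/2`. -/
theorem pigeonhole_lipschitz_lower_bound (d N : ℕ) (hN : 0 < N)
    (g : EuclideanSpace ℝ (Fin d) → ℝ)
    (S : Set (EuclideanSpace ℝ (Fin d)))
    (hS : volume S = 1)
    (hfin : (g '' S).Finite) (hcard : (g '' S).ncard ≤ N)
    (L D : ℝ) (hL : 0 ≤ L) (hD : 0 ≤ D) :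
    (∃ y : ℝ, (1 : ENNReal) / N ≤ volume {x | x ∈ S ∧ g x = y}) ∧
    (∀ (f : EuclideanSpace ℝ (Fin d) → ℝ) (a b : EuclideanSpace ℝ (Fin d)),
      a ∈ S → b ∈ S → g a = g b → f a - f b = L * D →
      ∃ x ∈ S, L * D / 2 ≤ |f x - g x|) :=
  pigeonhole_lipschitz_lower_bound_general d N hN g S hS hfin hcard L D
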